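/- arXiv:1306.0565 — 2 statements merged into one kernel-verified Lean document; each statement's English description precedes it below -/
import Mathlib

section
/- For every positive integer k, writing points of ℝ²∖{0} in polar coordinates (r, θ), the quadratic form Q_k(X) := (X v_k)² − v_k·(Hess v_k)(X, X) with v_k(z) = Im(z^k) satisfies the identity Q_k = (1/k)·(dv_k)² + k(k−1)·r^{2k}·(dθ)² as quadratic forms on tangent vectors. -/
/-!
Since `v_k = Im (z^k)` with `z^k` holomorphic, `dv_k(X) = k · Im (z^(k-1) X)` and
`Hess v_k (X, X) = k(k-1) · Im (z^(k-2) X²)`. Writing `w = z^(k-2)`, the claim reduces to the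
identity `Im (w z X)² - Im (w z²) · Im (w X²) = |w|² · (Im (z̄ X))²`, and
`Im (z̄ X) / |z|² = dθ(X)`.
-/

open Complex Real

/-- Directional derivative of `f : ℂ → ℝ` at `z` in direction `w`. -/
noncomputable def pd (w : ℂ) (f : ℂ → ℝ) (z : ℂ) : ℝ := fderiv ℝ f z w

/-- Laplacian. -/
noncomputable def lap (f : ℂ → ℝ) (z : ℂ) : ℝ :=
  pd 1 (pd 1 f) z + pd Complex.I (pd Complex.I f) z

/-- Inner product of the gradients of `f` and `g` at `z`. -/
noncomputable def gradInner (f g : ℂ → ℝ) (z : ℂ) : ℝ :=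
  pd 1 f z * pd 1 g z + pd Complex.I f z * pd Complex.I g z

/-- `|∇f|²` at `z`. -/
noncomputable def gradSq (f : ℂ → ℝ) (z : ℂ) : ℝ := gradInner f f z

/-- Hessian bilinear form of `f` at `z` evaluated on directions `X, Y`. -/
noncomputable def hess (f : ℂ → ℝ) (X Y : ℂ) (z : ℂ) : ℝ := pd Y (pd X f) z

/-- Sum of squares of the entries of the Hessian matrix of `f` at `z`. -/
noncomputable def hessSq (f : ℂ → ℝ) (z : ℂ) : ℝ :=
  (hess f 1 1 z) ^ 2 + (hess f 1 Complex.I z) ^ 2 +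
    (hess f Complex.I 1 z) ^ 2 + (hess f Complex.I Complex.I z) ^ 2

/-- The open disk of radius 2 centered at the origin. -/
def B2 : Set ℂ := Metric.ball 0 2

/-- Harmonic on a set: `C²` and the Laplacian vanishes there. -/
noncomputable def HarmOn (f : ℂ → ℝ) (s : Set ℂ) : Prop :=
  ContDiffOn ℝ 2 f s ∧ ∀ z ∈ s, lap f z = 0

/-- `v_k(z) = Im (z^k)`. -/
noncomputable def vk (k : ℕ) (z : ℂ) : ℝ := (z ^ k).im

theorem fderiv_im_apply {f : ℂ → ℂ} {f' z : ℂ} (hf : HasDerivAt f f' z) (X : ℂ) :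
    fderiv ℝ (fun w => (f w).im) z X = (f' * X).im := by
  have h : HasFDerivAt (fun w => (f w).im) (imCLM.comp
      ((ContinuousLinearMap.toSpanSingleton ℂ f').restrictScalars ℝ)) z :=
    imCLM.hasFDerivAt.comp z (hf.hasFDerivAt.restrictScalars ℝ)
  rw [h.fderiv]
  simp [mul_comm]

theorem fderiv_vk (k : ℕ) (z X : ℂ) :
    fderiv ℝ (vk k) z X = (k * z ^ (k - 1) * X).im :=
  fderiv_im_apply (hasDerivAt_pow k z) X

theorem hess_vk (k : ℕ) (z X : ℂ) :
    hess (vk k) X X z = (k * (k - 1 : ℕ) * z ^ (k - 2) * X ^ 2).im := by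
  have hpd : pd X (vk k) = fun w => (k * X * w ^ (k - 1)).im := by
    ext w
    rw [pd, fderiv_vk]
    ring_nf
  rw [hess, pd, hpd, fderiv_im_apply ((hasDerivAt_pow (k - 1) z).const_mul _), Nat.sub_sub]
  ring_nf

theorem im_mul_sq_sub_im_mul_im (w z X : ℂ) :
    (w * z * X).im ^ 2 - (w * z ^ 2).im * (w * X ^ 2).im =
      normSq w * (z.re * X.im - z.im * X.re) ^ 2 := by
  simp only [sq, mul_im, mul_re, normSq_apply]
  ring

theorem norm_pow_mul_div_sq_sq {z : ℂ} (hz : z ≠ 0) (n : ℕ) (D : ℝ) :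
    ‖z‖ ^ (2 * (n + 2)) * (D / ‖z‖ ^ 2) ^ 2 = normSq (z ^ n) * D ^ 2 := by
  have : ‖z‖ ≠ 0 := norm_ne_zero_iff.mpr hz
  rw [normSq_eq_norm_sq, norm_pow]
  field_simp
  ring

theorem stmt3_general (k : ℕ) :
    ∀ z : ℂ, z ≠ 0 → ∀ X : ℂ,
      (fderiv ℝ (vk k) z X) ^ 2 - vk k z * hess (vk k) X X z =
        (1 / (k : ℝ)) * (fderiv ℝ (vk k) z X) ^ 2
          + (k : ℝ) * ((k : ℝ) - 1) * ‖z‖ ^ (2 * k) *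
            ((z.re * X.im - z.im * X.re) / ‖z‖ ^ 2) ^ 2 := by
  intro z hz X
  rw [fderiv_vk, hess_vk]
  obtain _ | _ | n := k
  · simp
  · simp
  rw [show n + 1 + 1 = n + 2 from rfl]
  set w := z ^ n
  have hv : vk (n + 2) z = (w * z ^ 2).im := by rw [vk, pow_add]
  have hdv : ((n + 2 : ℕ) * z ^ (n + 2 - 1) * X).im = (n + 2) * (w * z * X).im := by
    rw [show (n + 2 : ℕ) * z ^ (n + 2 - 1) * X = ((n + 2 : ℝ) : ℂ) * (w * z * X) by
      push_cast; ring, im_ofReal_mul]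
  have hH : ((n + 2 : ℕ) * (n + 2 - 1 : ℕ) * z ^ (n + 2 - 2) * X ^ 2).im
      = (n + 2) * (n + 1) * (w * X ^ 2).im := by
    rw [show ((n + 2 : ℕ) * (n + 2 - 1 : ℕ) * z ^ (n + 2 - 2) * X ^ 2 : ℂ)
      = (((n + 2) * (n + 1) : ℝ) : ℂ) * (w * X ^ 2) by push_cast; ring, im_ofReal_mul]
  rw [hdv, hH, hv, mul_assoc _ (‖z‖ ^ _), norm_pow_mul_div_sq_sq hz]
  push_cast
  field_simp
  linear_combination (n + 1) * im_mul_sq_sub_im_mul_im w z X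

theorem stmt3 (k : ℕ) (hk : 1 ≤ k) :
    ∀ z : ℂ, z ≠ 0 → ∀ X : ℂ,
      (fderiv ℝ (vk k) z X) ^ 2 - vk k z * hess (vk k) X X z =
        (1 / (k : ℝ)) * (fderiv ℝ (vk k) z X) ^ 2
          + (k : ℝ) * ((k : ℝ) - 1) * ‖z‖ ^ (2 * k) *
            ((z.re * X.im - z.im * X.re) / ‖z‖ ^ 2) ^ 2 :=
  stmt3_general k
end

section
/- Let k be a positive integer, v_k(z) = Im(z^k), and let h be a smooth function on B_2 satisfying v_k·Δh + 2⟨∇v_k, ∇h⟩ + v_k·|∇h|² = 0. Then F := |∇h|² satisfies the differential inequality v_k²·ΔF + 2v_k·⟨∇F, ∇v_k⟩ + 2v_k²·⟨∇F, ∇h⟩ ≥ v_k²·F²/(k+1) on B_2. -/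
open Complex Real

lemma pd_congr {f g : ℂ → ℝ} {z : ℂ} (h : f =ᶠ[nhds z] g) (w : ℂ) :
    pd w f z = pd w g z := by unfold pd; rw [h.fderiv_eq]

lemma pd_contDiffAt {n : WithTop ℕ∞} {f : ℂ → ℝ} {z : ℂ}
    (hf : ContDiffAt ℝ (n+1) f z) (w : ℂ) : ContDiffAt ℝ n (pd w f) z := by
  have h1 : ContDiffAt ℝ n (fderiv ℝ f) z := hf.fderiv_right le_rfl
  exact ((ContinuousLinearMap.apply ℝ ℝ w).contDiff.contDiffAt).comp z h1

lemma pd_add {f g : ℂ → ℝ} {z : ℂ} (hf : DifferentiableAt ℝ f z)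
    (hg : DifferentiableAt ℝ g z) (w : ℂ) :
    pd w (fun x => f x + g x) z = pd w f z + pd w g z := by
  unfold pd; rw [fderiv_fun_add hf hg]; rfl

lemma pd_mul {f g : ℂ → ℝ} {z : ℂ} (hf : DifferentiableAt ℝ f z)
    (hg : DifferentiableAt ℝ g z) (w : ℂ) :
    pd w (fun x => f x * g x) z = pd w f z * g z + f z * pd w g z := by
  unfold pd; rw [fderiv_fun_mul hf hg]; simp; ring

lemma pd_const_mul {f : ℂ → ℝ} {z : ℂ} (hf : DifferentiableAt ℝ f z) (c : ℝ) (w : ℂ) :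
    pd w (fun x => c * f x) z = c * pd w f z := by
  unfold pd; rw [fderiv_const_mul hf]; rfl

lemma pd_comm {f : ℂ → ℝ} {z : ℂ} (hf : ContDiffAt ℝ 2 f z) (a b : ℂ) :
    pd a (pd b f) z = pd b (pd a f) z := by
  have hd : DifferentiableAt ℝ (fderiv ℝ f) z :=
    (hf.fderiv_right (m := 1) (by norm_num)).differentiableAt one_ne_zero
  have key : ∀ u v : ℂ, pd u (pd v f) z = fderiv ℝ (fderiv ℝ f) z u v := by
    intro u v
    have : pd v f = fun x => (ContinuousLinearMap.apply ℝ ℝ v) (fderiv ℝ f x) := rfl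
    rw [this]
    unfold pd
    rw [show (fun x => (ContinuousLinearMap.apply ℝ ℝ v) (fderiv ℝ f x))
        = (ContinuousLinearMap.apply ℝ ℝ v) ∘ (fderiv ℝ f) from rfl,
      fderiv_comp z (ContinuousLinearMap.apply ℝ ℝ v).differentiableAt hd]
    simp
  rw [key, key, hf.isSymmSndFDerivAt (by simp)]


lemma hasFDerivAt_cim (c : ℂ) (n : ℕ) (z : ℂ) :
    HasFDerivAt (fun x : ℂ => (c * x ^ n).im)
      (Complex.imCLM.comp ((((1 : ℂ →L[ℂ] ℂ).smulRight (c * n * z ^ (n-1))).restrictScalars ℝ)))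
      z := by
  have h1 : HasDerivAt (fun x : ℂ => c * x ^ n) (c * (n * z ^ (n-1))) z :=
    (hasDerivAt_pow n z).const_mul c
  have h2 := (h1.hasFDerivAt.restrictScalars ℝ)
  have h3 := Complex.imCLM.hasFDerivAt.comp z h2
  exact h3.congr_fderiv (by ext w; simp; ring)


lemma pd_cim (c : ℂ) (n : ℕ) (z w : ℂ) :
    pd w (fun x => (c * x ^ n).im) z = (c * n * z ^ (n-1) * w).im := by
  unfold pd
  rw [(hasFDerivAt_cim c n z).fderiv]
  simp [mul_comm]

lemma differentiableAt_cim (c : ℂ) (n : ℕ) (z : ℂ) :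
    DifferentiableAt ℝ (fun x : ℂ => (c * x ^ n).im) z :=
  (hasFDerivAt_cim c n z).differentiableAt


lemma vk_eq (k : ℕ) : vk k = fun x => ((1:ℂ) * x ^ k).im := by
  funext x; simp [vk]

lemma pd_vk (k : ℕ) (w : ℂ) :
    pd w (vk k) = fun z => ((k:ℂ) * w * z ^ (k-1)).im := by
  funext z
  rw [vk_eq, pd_cim]
  congr 1; ring

lemma pd_pd_vk (k : ℕ) (a w z : ℂ) :
    pd a (pd w (vk k)) z = ((k:ℂ) * ((k-1 : ℕ):ℂ) * z ^ (k-1-1) * a * w).im := by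
  rw [pd_vk, pd_cim]
  congr 1; ring

lemma differentiableAt_vk (k : ℕ) (z : ℂ) : DifferentiableAt ℝ (vk k) z := by
  rw [vk_eq]; exact differentiableAt_cim 1 k z

lemma differentiableAt_pd_vk (k : ℕ) (w z : ℂ) : DifferentiableAt ℝ (pd w (vk k)) z := by
  rw [pd_vk]; exact differentiableAt_cim _ _ z


lemma im_sq_identity (A z w : ℂ) :
    ((A*z*w).im)^2 - (A*z*z).im * (A*w*w).im
      = Complex.normSq A * (((starRingEnd ℂ) z * w).im)^2 := by
  simp [Complex.mul_im, Complex.mul_re, Complex.normSq_apply]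
  ring

lemma key_ineq (k : ℕ) (hk : 1 ≤ k) (z : ℂ) (p q : ℝ) :
    0 ≤ (k:ℝ) * ((z^k).im)^2 * (p^2+q^2)^2
      + 4*((k:ℝ)+1) * (z^k).im * (p^2+q^2) * (((k:ℂ) * z^(k-1) * (⟨p,q⟩:ℂ)).im)
      + 8*((k:ℝ)+1) * (((k:ℂ) * z^(k-1) * (⟨p,q⟩:ℂ)).im)^2
      - 4*((k:ℝ)+1) * (z^k).im * (((k:ℂ) * ((k-1:ℕ):ℂ) * z^(k-1-1) * (⟨p,q⟩:ℂ)^2).im) := by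
  obtain ⟨n, rfl⟩ | rfl : (∃ n, k = n + 2) ∨ k = 1 := by
    rcases Nat.lt_or_ge k 2 with h | h
    · right; omega
    · left; exact ⟨k - 2, by omega⟩
  · -- k = n + 2
    set w : ℂ := (⟨p,q⟩:ℂ) with hw
    have e1 : n + 2 - 1 = n + 1 := rfl
    have e2 : n + 1 - 1 = n := rfl
    have e3 : (n + 2 - 1 : ℕ) = n + 1 := rfl
    rw [e1, e2]
    set t : ℝ := (z^(n+1) * w).im with ht
    set v : ℝ := (z^(n+2)).im with hv
    set qq : ℝ := (z^n * w * w).im with hqq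
    set m : ℝ := ((starRingEnd ℂ) z * w).im with hm
    set N : ℝ := Complex.normSq z ^ n with hN
    have hs : (((n+2:ℕ):ℂ) * z^(n+1) * w).im = ((n:ℝ)+2) * t := by
      push_cast
      simp [ht, Complex.mul_im, Complex.mul_re]
      ring
    have hQ : (((n+2:ℕ):ℂ) * ((n+1:ℕ):ℂ) * z^n * w^2).im = ((n:ℝ)+2)*((n:ℝ)+1)*qq := by
      push_cast
      simp [hqq, pow_two, Complex.mul_im, Complex.mul_re]
      ring
    have hstar : t^2 - v * qq = N * m^2 := by
      have := im_sq_identity (z^n) z w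
      rw [hN, ← map_pow Complex.normSq z n]
      calc t^2 - v*qq = ((z^n*z*w).im)^2 - (z^n*z*z).im * (z^n*w*w).im := by
            rw [ht, hv, hqq, show z^n*z*w = z^(n+1)*w from by ring,
                show z^n*z*z = z^(n+2) from by ring]
        _ = Complex.normSq (z^n) * m^2 := by rw [im_sq_identity, hm]
    rw [hs, hQ]
    push_cast
    set K : ℝ := ((n:ℝ)+2) * v^2 * (p^2+q^2)^2
      + 4*(((n:ℝ)+2)+1) * v * (p^2+q^2) * (((n:ℝ)+2)*t)
      + 8*(((n:ℝ)+2)+1) * (((n:ℝ)+2)*t)^2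
      - 4*(((n:ℝ)+2)+1) * v * (((n:ℝ)+2)*((n:ℝ)+1)*qq) with hK
    have hKeq : K = ((n:ℝ)+2) * (v*(p^2+q^2) + 2*((n:ℝ)+3)*t)^2
        + 4*((n:ℝ)+2)*((n:ℝ)+3)*((n:ℝ)+1) * (N * m^2) := by
      rw [hK]
      linear_combination (4*((n:ℝ)+2)*((n:ℝ)+3)*((n:ℝ)+1)) * hstar
    have h1 : 0 ≤ K := by
      rw [hKeq]
      have hN0 : (0:ℝ) ≤ N * m^2 := mul_nonneg (by rw [hN]; exact pow_nonneg (Complex.normSq_nonneg z) n) (sq_nonneg m)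
      have h2 : (0:ℝ) ≤ ((n:ℝ)+2) * (v*(p^2+q^2) + 2*((n:ℝ)+3)*t)^2 := by positivity
      have h3 : (0:ℝ) ≤ 4*((n:ℝ)+2)*((n:ℝ)+3)*((n:ℝ)+1) * (N * m^2) :=
        mul_nonneg (by positivity) hN0
      linarith
    linarith [h1]
  · -- k = 1
    simp only [Nat.sub_self, pow_zero, Nat.cast_zero, Nat.cast_one, mul_zero, zero_mul,
      Complex.zero_im, one_mul, mul_one, Complex.mul_im, Complex.one_re, Complex.one_im]
    norm_num
    nlinarith [sq_nonneg (z.im * (p^2+q^2) + 4*q)]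

lemma pd_const (c : ℝ) (w z : ℂ) : pd w (fun _ => c) z = 0 := by
  unfold pd; simp

lemma contDiffAt_pd {f : ℂ → ℝ} {z : ℂ} {n : ℕ} (hf : ContDiffAt ℝ (n+1 : ℕ) f z) (w : ℂ) :
    ContDiffAt ℝ n (pd w f) z := by
  apply pd_contDiffAt (n := (n : WithTop ℕ∞)) ?_ w
  exact_mod_cast hf

lemma diffAt_pd {f : ℂ → ℝ} {z : ℂ} (hf : ContDiffAt ℝ (2:ℕ) f z) (w : ℂ) :
    DifferentiableAt ℝ (pd w f) z :=
  (contDiffAt_pd (n := 1) hf w).differentiableAt (by simp)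

set_option maxHeartbeats 1600000 in
theorem stmt4 (k : ℕ) (hk : 1 ≤ k) (h : ℂ → ℝ)
    (hh : ContDiffOn ℝ (⊤ : ℕ∞) h B2)
    (heq : ∀ z ∈ B2,
      vk k z * lap h z + 2 * gradInner (vk k) h z + vk k z * gradSq h z = 0) :
    ∀ z ∈ B2,
      (vk k z) ^ 2 * (gradSq h z) ^ 2 / ((k : ℝ) + 1) ≤
        (vk k z) ^ 2 * lap (gradSq h) z
          + 2 * vk k z * gradInner (gradSq h) (vk k) z
          + 2 * (vk k z) ^ 2 * gradInner (gradSq h) h z := by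
  intro z hz
  have hB2 : IsOpen B2 := Metric.isOpen_ball
  have hmem : B2 ∈ nhds z := hB2.mem_nhds hz
  have hC : ∀ (n : ℕ), ∀ x ∈ B2, ContDiffAt ℝ n h x := fun n x hx =>
    ((hh x hx).contDiffAt (hB2.mem_nhds hx)).of_le (by exact_mod_cast le_top)
  have Dpd : ∀ x ∈ B2, ∀ w, DifferentiableAt ℝ (pd w h) x := fun x hx w =>
    diffAt_pd (hC 2 x hx) w
  have Dpd2 : ∀ x ∈ B2, ∀ a b, DifferentiableAt ℝ (pd a (pd b h)) x := fun x hx a b =>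
    diffAt_pd (contDiffAt_pd (n := 2) (hC 3 x hx) b) a
  -- Schwarz symmetry on B2
  have Esw : ∀ x ∈ B2, pd 1 (pd Complex.I h) x = pd Complex.I (pd 1 h) x := fun x hx =>
    pd_comm (hC 2 x hx) 1 Complex.I
  -- first derivatives of gradSq h on B2
  have pdF : ∀ x ∈ B2, ∀ w, pd w (gradSq h) x
      = 2*(pd 1 h x * pd w (pd 1 h) x + pd Complex.I h x * pd w (pd Complex.I h) x) := by
    intro x hx w
    have hgs : gradSq h = fun y => pd 1 h y * pd 1 h y + pd Complex.I h y * pd Complex.I h y := rfl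
    rw [hgs, pd_add ((Dpd x hx 1).fun_mul (Dpd x hx 1))
        ((Dpd x hx Complex.I).fun_mul (Dpd x hx Complex.I)) w,
      pd_mul (Dpd x hx 1) (Dpd x hx 1) w,
      pd_mul (Dpd x hx Complex.I) (Dpd x hx Complex.I) w]
    ring
  -- third order commutation
  have cA : pd Complex.I (pd Complex.I (pd 1 h)) z
      = pd 1 (pd Complex.I (pd Complex.I h)) z := by
    have e1 : pd Complex.I (pd Complex.I (pd 1 h)) z
        = pd Complex.I (pd 1 (pd Complex.I h)) z :=
      pd_congr (Filter.eventuallyEq_of_mem hmem (fun x hx => (Esw x hx).symm)) Complex.I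
    have e2 : pd Complex.I (pd 1 (pd Complex.I h)) z
        = pd 1 (pd Complex.I (pd Complex.I h)) z :=
      pd_comm (contDiffAt_pd (n := 2) (hC 3 z hz) Complex.I) Complex.I 1
    exact e1.trans e2
  have cB : pd 1 (pd 1 (pd Complex.I h)) z = pd Complex.I (pd 1 (pd 1 h)) z := by
    have e1 : pd 1 (pd 1 (pd Complex.I h)) z = pd 1 (pd Complex.I (pd 1 h)) z :=
      pd_congr (Filter.eventuallyEq_of_mem hmem (fun x hx => Esw x hx)) 1
    have e2 : pd 1 (pd Complex.I (pd 1 h)) z = pd Complex.I (pd 1 (pd 1 h)) z :=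
      pd_comm (contDiffAt_pd (n := 2) (hC 3 z hz) 1) 1 Complex.I
    exact e1.trans e2
  -- pd of lap h
  have lap_pd : ∀ w, pd w (lap h) z
      = pd w (pd 1 (pd 1 h)) z + pd w (pd Complex.I (pd Complex.I h)) z := by
    intro w
    have hl : lap h = fun x => pd 1 (pd 1 h) x + pd Complex.I (pd Complex.I h) x := rfl
    rw [hl, pd_add (Dpd2 z hz 1 1) (Dpd2 z hz Complex.I Complex.I) w]
  -- Laplacian of gradSq h
  have lapF : lap (gradSq h) z
      = 2*(pd 1 (pd 1 h) z^2 + pd Complex.I (pd 1 h) z^2 + pd Complex.I (pd 1 h) z^2 + pd Complex.I (pd Complex.I h) z^2) + 2*(pd 1 h z * pd 1 (lap h) z + pd Complex.I h z * pd Complex.I (lap h) z) := by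
    have hl : lap (gradSq h) z
        = pd 1 (pd 1 (gradSq h)) z + pd Complex.I (pd Complex.I (gradSq h)) z := rfl
    have hev : ∀ w : ℂ, pd w (gradSq h) =ᶠ[nhds z]
        (fun x => 2*(pd 1 h x * pd w (pd 1 h) x
          + pd Complex.I h x * pd w (pd Complex.I h) x)) := fun w =>
      Filter.eventuallyEq_of_mem hmem (fun x hx => pdF x hx w)
    have part : ∀ w : ℂ, pd w (pd w (gradSq h)) z
        = 2*(pd w (pd 1 h) z * pd w (pd 1 h) z + pd 1 h z * pd w (pd w (pd 1 h)) z
          + pd w (pd Complex.I h) z * pd w (pd Complex.I h) z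
          + pd Complex.I h z * pd w (pd w (pd Complex.I h)) z) := by
      intro w
      rw [pd_congr (hev w) w,
        pd_const_mul (((Dpd z hz 1).fun_mul (Dpd2 z hz w 1)).fun_add
          ((Dpd z hz Complex.I).fun_mul (Dpd2 z hz w Complex.I))) 2 w,
        pd_add ((Dpd z hz 1).fun_mul (Dpd2 z hz w 1))
          ((Dpd z hz Complex.I).fun_mul (Dpd2 z hz w Complex.I)) w,
        pd_mul (Dpd z hz 1) (Dpd2 z hz w 1) w,
        pd_mul (Dpd z hz Complex.I) (Dpd2 z hz w Complex.I) w]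
      ring
    rw [hl, part 1, part Complex.I, lap_pd 1, lap_pd Complex.I]
    rw [Esw z hz, cA, cB]
    ring
  -- the PDE at z
  have E0 : vk k z * (pd 1 (pd 1 h) z + pd Complex.I (pd Complex.I h) z) + 2*(pd 1 (vk k) z * pd 1 h z + pd Complex.I (vk k) z * pd Complex.I h z) + vk k z * (pd 1 h z * pd 1 h z + pd Complex.I h z * pd Complex.I h z) = 0 :=
    heq z hz
  -- differentiability of pieces
  have DlapH : DifferentiableAt ℝ (lap h) z :=
    (Dpd2 z hz 1 1).add (Dpd2 z hz Complex.I Complex.I)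
  have DgradSq : DifferentiableAt ℝ (gradSq h) z :=
    ((Dpd z hz 1).mul (Dpd z hz 1)).add ((Dpd z hz Complex.I).mul (Dpd z hz Complex.I))
  have DgradInner : DifferentiableAt ℝ (gradInner (vk k) h) z :=
    ((differentiableAt_pd_vk k 1 z).mul (Dpd z hz 1)).add
      ((differentiableAt_pd_vk k Complex.I z).mul (Dpd z hz Complex.I))
  -- derivative of the PDE
  have hGz : ∀ w, pd w (fun x => vk k x * lap h x + 2 * gradInner (vk k) h x
      + vk k x * gradSq h x) z = 0 := by
    intro w
    have hev : (fun x => vk k x * lap h x + 2 * gradInner (vk k) h x + vk k x * gradSq h x)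
        =ᶠ[nhds z] (fun _ => (0:ℝ)) :=
      Filter.eventuallyEq_of_mem hmem (fun x hx => heq x hx)
    rw [pd_congr hev w, pd_const]
  have Eexp : ∀ w, pd w (vk k) z * lap h z + vk k z * pd w (lap h) z
      + 2*(pd w (pd 1 (vk k)) z * pd 1 h z + pd 1 (vk k) z * pd w (pd 1 h) z
        + pd w (pd Complex.I (vk k)) z * pd Complex.I h z
        + pd Complex.I (vk k) z * pd w (pd Complex.I h) z)
      + (pd w (vk k) z * gradSq h z + vk k z * pd w (gradSq h) z) = 0 := by
    intro w
    have := hGz w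
    rw [pd_add (((differentiableAt_vk k z).fun_mul DlapH).fun_add (DgradInner.const_mul 2))
        ((differentiableAt_vk k z).fun_mul DgradSq) w,
      pd_add ((differentiableAt_vk k z).fun_mul DlapH) (DgradInner.const_mul 2) w,
      pd_mul (differentiableAt_vk k z) DlapH w,
      pd_const_mul DgradInner 2 w,
      pd_mul (differentiableAt_vk k z) DgradSq w] at this
    have hgi : pd w (gradInner (vk k) h) z
        = pd w (pd 1 (vk k)) z * pd 1 h z + pd 1 (vk k) z * pd w (pd 1 h) z
          + pd w (pd Complex.I (vk k)) z * pd Complex.I h z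
          + pd Complex.I (vk k) z * pd w (pd Complex.I h) z := by
      have hgif : gradInner (vk k) h = fun x => pd 1 (vk k) x * pd 1 h x
          + pd Complex.I (vk k) x * pd Complex.I h x := rfl
      rw [hgif, pd_add ((differentiableAt_pd_vk k 1 z).fun_mul (Dpd z hz 1))
          ((differentiableAt_pd_vk k Complex.I z).fun_mul (Dpd z hz Complex.I)) w,
        pd_mul (differentiableAt_pd_vk k 1 z) (Dpd z hz 1) w,
        pd_mul (differentiableAt_pd_vk k Complex.I z) (Dpd z hz Complex.I) w]
      ring
    rw [hgi] at this
    linarith [this]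
  -- clean forms of the differentiated PDE
  have lapz : lap h z = pd 1 (pd 1 h) z + pd Complex.I (pd Complex.I h) z := rfl
  have gsz : gradSq h z = pd 1 h z * pd 1 h z + pd Complex.I h z * pd Complex.I h z := rfl
  have E1 : pd 1 (vk k) z * (pd 1 (pd 1 h) z + pd Complex.I (pd Complex.I h) z) + vk k z * pd 1 (lap h) z
      + 2*(pd 1 (pd 1 (vk k)) z * pd 1 h z + pd 1 (vk k) z * pd 1 (pd 1 h) z + pd 1 (pd Complex.I (vk k)) z * pd Complex.I h z + pd Complex.I (vk k) z * pd Complex.I (pd 1 h) z)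
      + (pd 1 (vk k) z * (pd 1 h z * pd 1 h z + pd Complex.I h z * pd Complex.I h z) + vk k z * (2*(pd 1 h z * pd 1 (pd 1 h) z + pd Complex.I h z * pd Complex.I (pd 1 h) z))) = 0 := by
    have := Eexp 1
    rw [lapz, gsz, pdF z hz 1, Esw z hz] at this
    linear_combination this
  have E2 : pd Complex.I (vk k) z * (pd 1 (pd 1 h) z + pd Complex.I (pd Complex.I h) z) + vk k z * pd Complex.I (lap h) z
      + 2*(pd Complex.I (pd 1 (vk k)) z * pd 1 h z + pd 1 (vk k) z * pd Complex.I (pd 1 h) z + pd Complex.I (pd Complex.I (vk k)) z * pd Complex.I h z + pd Complex.I (vk k) z * pd Complex.I (pd Complex.I h) z)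
      + (pd Complex.I (vk k) z * (pd 1 h z * pd 1 h z + pd Complex.I h z * pd Complex.I h z) + vk k z * (2*(pd 1 h z * pd Complex.I (pd 1 h) z + pd Complex.I h z * pd Complex.I (pd Complex.I h) z))) = 0 := by
    have := Eexp Complex.I
    rw [lapz, gsz, pdF z hz Complex.I] at this
    linear_combination this
  -- key algebraic inequality in terms of the atoms
  have hS : (((k:ℕ):ℂ) * z^(k-1) * (⟨pd 1 h z, pd Complex.I h z⟩:ℂ)).im = pd 1 (vk k) z * pd 1 h z + pd Complex.I (vk k) z * pd Complex.I h z := by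
    simp only [pd_vk]
    simp [Complex.mul_im, Complex.mul_re]
    ring
  have hQe : (((k:ℕ):ℂ) * ((k-1:ℕ):ℂ) * z^(k-1-1) * (⟨pd 1 h z, pd Complex.I h z⟩:ℂ)^2).im
      = pd 1 (pd 1 (vk k)) z * pd 1 h z^2 + (pd Complex.I (pd 1 (vk k)) z + pd 1 (pd Complex.I (vk k)) z) * pd 1 h z * pd Complex.I h z + pd Complex.I (pd Complex.I (vk k)) z * pd Complex.I h z^2 := by
    simp only [pd_pd_vk, pow_two]
    simp [Complex.mul_im, Complex.mul_re]
    ring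
  have hVe : (z ^ k).im = vk k z := rfl
  have key2 : 0 ≤ (k:ℝ) * vk k z^2 * (pd 1 h z^2 + pd Complex.I h z^2)^2
      + 4*((k:ℝ)+1) * vk k z * (pd 1 h z^2 + pd Complex.I h z^2) * (pd 1 (vk k) z * pd 1 h z + pd Complex.I (vk k) z * pd Complex.I h z)
      + 8*((k:ℝ)+1) * (pd 1 (vk k) z * pd 1 h z + pd Complex.I (vk k) z * pd Complex.I h z)^2
      - 4*((k:ℝ)+1) * vk k z * (pd 1 (pd 1 (vk k)) z * pd 1 h z^2 + (pd Complex.I (pd 1 (vk k)) z + pd 1 (pd Complex.I (vk k)) z) * pd 1 h z * pd Complex.I h z + pd Complex.I (pd Complex.I (vk k)) z * pd Complex.I h z^2) := by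
    have := key_ineq k hk z (pd 1 h z) (pd Complex.I h z)
    rw [hS, hQe, hVe] at this
    exact this
  -- finish
  have hk1 : (0:ℝ) < (k:ℝ) + 1 := by positivity
  rw [div_le_iff₀ hk1]
  have giV : gradInner (gradSq h) (vk k) z
      = pd 1 (gradSq h) z * pd 1 (vk k) z + pd Complex.I (gradSq h) z * pd Complex.I (vk k) z := rfl
  have giH : gradInner (gradSq h) h z
      = pd 1 (gradSq h) z * pd 1 h z + pd Complex.I (gradSq h) z * pd Complex.I h z := rfl
  have pdF1 : pd 1 (gradSq h) z = 2*(pd 1 h z * pd 1 (pd 1 h) z + pd Complex.I h z * pd Complex.I (pd 1 h) z) := by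
    rw [pdF z hz 1, Esw z hz]
  have pdFI : pd Complex.I (gradSq h) z = 2*(pd 1 h z * pd Complex.I (pd 1 h) z + pd Complex.I h z * pd Complex.I (pd Complex.I h) z) := by
    rw [pdF z hz Complex.I]
  rw [lapF, giV, giH, pdF1, pdFI, gsz]
  have sq1 : (0:ℝ) ≤ ((k:ℝ)+1) * (vk k z*(pd 1 (pd 1 h) z - pd Complex.I (pd Complex.I h) z))^2 := by positivity
  have sq2 : (0:ℝ) ≤ ((k:ℝ)+1) * (vk k z*pd Complex.I (pd 1 h) z)^2 := by positivity
  have premain : (vk k z^2 * (2*(pd 1 (pd 1 h) z^2 + pd Complex.I (pd 1 h) z^2 + pd Complex.I (pd 1 h) z^2 + pd Complex.I (pd Complex.I h) z^2) + 2*(pd 1 h z * pd 1 (lap h) z + pd Complex.I h z * pd Complex.I (lap h) z))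
      + 2 * vk k z * (2*(pd 1 h z * pd 1 (pd 1 h) z + pd Complex.I h z * pd Complex.I (pd 1 h) z) * pd 1 (vk k) z + 2*(pd 1 h z * pd Complex.I (pd 1 h) z + pd Complex.I h z * pd Complex.I (pd Complex.I h) z) * pd Complex.I (vk k) z)
      + 2 * vk k z^2 * (2*(pd 1 h z * pd 1 (pd 1 h) z + pd Complex.I h z * pd Complex.I (pd 1 h) z) * pd 1 h z + 2*(pd 1 h z * pd Complex.I (pd 1 h) z + pd Complex.I h z * pd Complex.I (pd Complex.I h) z) * pd Complex.I h z)) * ((k:ℝ)+1)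
      - vk k z^2 * (pd 1 h z * pd 1 h z + pd Complex.I h z * pd Complex.I h z)^2
      = ((k:ℝ) * vk k z^2 * (pd 1 h z^2 + pd Complex.I h z^2)^2
        + 4*((k:ℝ)+1) * vk k z * (pd 1 h z^2 + pd Complex.I h z^2) * (pd 1 (vk k) z * pd 1 h z + pd Complex.I (vk k) z * pd Complex.I h z)
        + 8*((k:ℝ)+1) * (pd 1 (vk k) z * pd 1 h z + pd Complex.I (vk k) z * pd Complex.I h z)^2
        - 4*((k:ℝ)+1) * vk k z * (pd 1 (pd 1 (vk k)) z * pd 1 h z^2 + (pd Complex.I (pd 1 (vk k)) z + pd 1 (pd Complex.I (vk k)) z) * pd 1 h z * pd Complex.I h z + pd Complex.I (pd Complex.I (vk k)) z * pd Complex.I h z^2))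
      + ((k:ℝ)+1) * (vk k z*(pd 1 (pd 1 h) z - pd Complex.I (pd Complex.I h) z))^2 + 4*(((k:ℝ)+1) * (vk k z*pd Complex.I (pd 1 h) z)^2) := by
    linear_combination ((k:ℝ)+1)*(2*vk k z*pd 1 h z)*E1 + ((k:ℝ)+1)*(2*vk k z*pd Complex.I h z)*E2
      + ((k:ℝ)+1)*(vk k z*(pd 1 (pd 1 h) z + pd Complex.I (pd Complex.I h) z) - 4*(pd 1 (vk k) z*pd 1 h z + pd Complex.I (vk k) z*pd Complex.I h z) - vk k z*(pd 1 h z*pd 1 h z + pd Complex.I h z*pd Complex.I h z))*E0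
  linarith [key2, sq1, sq2, premain]
end
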